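/- Let k1, k2 ≥ 1. The set {R : Matrix (Fin k1) (Fin k2) ℝ | B_{k1} * R * (B_{k2})ᵀ = 0} is a linear subspace of Matrix (Fin k1) (Fin k2) ℝ whose dimension (finrank over ℝ) equals k1 + k2 − 1. -/
import Mathlib


open Matrix

/-- The matrix `B_k = [I_{k-1}, -1_{k-1}]` of size `(k-1) × k`. -/
def Bmat (k : ℕ) : Matrix (Fin (k - 1)) (Fin k) ℝ :=
  Matrix.of fun i j => if (j : ℕ) = (i : ℕ) then 1 else if (j : ℕ) = k - 1 then -1 else 0

lemma Bmat_sum (k : ℕ) (hk : 1 ≤ k) (v : Fin k → ℝ) (i : Fin (k - 1)) :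
    ∑ a : Fin k, Bmat k i a * v a
      = v ⟨i, lt_of_lt_of_le i.2 (Nat.sub_le k 1)⟩ - v ⟨k - 1, by omega⟩ := by
  have hi : (i : ℕ) < k - 1 := i.2
  have h1 : ∀ a : Fin k, Bmat k i a * v a
      = (if a = ⟨i, by omega⟩ then v a else 0)
        + (if a = ⟨k - 1, by omega⟩ then -v a else 0) := by
    intro a
    simp only [Bmat, Matrix.of_apply, Fin.ext_iff]
    by_cases h1 : (a : ℕ) = (i : ℕ)
    · simp [h1]; omega
    · have hne : ¬ (k - 1 = (i : ℕ)) := by omega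
      by_cases h2 : (a : ℕ) = k - 1 <;> simp [h1, h2, hne]
  rw [Finset.sum_congr rfl (fun a _ => h1 a), Finset.sum_add_distrib,
    Finset.sum_ite_eq' _ _ (fun a => v a), Finset.sum_ite_eq' _ _ (fun a => -v a)]
  simp
  ring

theorem stmt6 (k1 k2 : ℕ) (hk1 : 1 ≤ k1) (hk2 : 1 ≤ k2) :
    ∃ S : Submodule ℝ (Matrix (Fin k1) (Fin k2) ℝ),
      (∀ R : Matrix (Fin k1) (Fin k2) ℝ, R ∈ S ↔ Bmat k1 * R * (Bmat k2)ᵀ = 0) ∧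
      Module.finrank ℝ S = k1 + k2 - 1 := by
  classical
  set f : Matrix (Fin k1) (Fin k2) ℝ →ₗ[ℝ] Matrix (Fin (k1 - 1)) (Fin (k2 - 1)) ℝ :=
    { toFun := fun R => Bmat k1 * R * (Bmat k2)ᵀ
      map_add' := fun R S => by
        simp [Matrix.mul_add, Matrix.add_mul]
      map_smul' := fun c R => by
        simp [Matrix.mul_smul, Matrix.smul_mul] } with hf
  refine ⟨LinearMap.ker f, fun R => Iff.rfl, ?_⟩
  have hsurj : Function.Surjective f := by
    intro M
    set Rm : Matrix (Fin k1) (Fin k2) ℝ := Matrix.of fun a b =>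
      if h : (a : ℕ) < k1 - 1 ∧ (b : ℕ) < k2 - 1 then M ⟨a, h.1⟩ ⟨b, h.2⟩ else 0 with hRm
    refine ⟨Rm, ?_⟩
    ext i j
    show (Bmat k1 * Rm * (Bmat k2)ᵀ) i j = M i j
    rw [Matrix.mul_apply]
    have : ∀ b : Fin k2, (Bmat k1 * Rm) i b
        = if h : (b : ℕ) < k2 - 1 then M i ⟨b, h⟩ else 0 := by
      intro b
      rw [Matrix.mul_apply, Bmat_sum k1 hk1]
      have hi : (i : ℕ) < k1 - 1 := i.2
      by_cases h : (b : ℕ) < k2 - 1 <;> simp [hRm, h, hi]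
    simp only [this, Matrix.transpose_apply]
    have h2 : ∀ b : Fin k2, (Bmat k2) j b * (if h : (b : ℕ) < k2 - 1 then M i ⟨b, h⟩ else 0)
        = Bmat k2 j b * (fun b : Fin k2 => if h : (b : ℕ) < k2 - 1 then M i ⟨b, h⟩ else 0) b :=
      fun b => rfl
    calc ∑ b : Fin k2, (if h : (b : ℕ) < k2 - 1 then M i ⟨b, h⟩ else 0) * Bmat k2 j b
        = ∑ b : Fin k2, Bmat k2 j b *
            (fun b : Fin k2 => if h : (b : ℕ) < k2 - 1 then M i ⟨b, h⟩ else 0) b := by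
          refine Finset.sum_congr rfl fun b _ => by ring
      _ = M i j := by
          rw [Bmat_sum k2 hk2]
          have hj : (j : ℕ) < k2 - 1 := j.2
          simp [hj]
  have hr := LinearMap.finrank_range_add_finrank_ker f
  rw [LinearMap.range_eq_top.mpr hsurj, finrank_top] at hr
  rw [Module.finrank_matrix, Module.finrank_matrix] at hr
  simp only [Fintype.card_fin, Module.finrank_self, mul_one] at hr
  obtain ⟨a, rfl⟩ : ∃ a, k1 = a + 1 := ⟨k1 - 1, by omega⟩
  obtain ⟨b, rfl⟩ : ∃ b, k2 = b + 1 := ⟨k2 - 1, by omega⟩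
  simp only [Nat.add_sub_cancel] at hr
  have hab : (a + 1) * (b + 1) = a * b + (a + b + 1) := by ring
  omega
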